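/- (ε-thickening preserves intervals) Let P be a poset with a family of superlinear translations Ω, and let I be an interval of P. Then for every ε ≥ 0, the ε-thickening I^ε := {r ∈ P : ∃ p,p' ∈ I with p ≤ Ω_ε(r) and r ≤ Ω_ε(p')} is also an interval of P (nonempty, convex, and connected). -/

import Mathlib

open scoped NNReal

variable {P : Type*} [PartialOrder P]

/-- One step of a zigzag inside `I`. -/
def zigStep (I : Set P) (a b : P) : Prop := a ∈ I ∧ b ∈ I ∧ (a ≤ b ∨ b ≤ a)

/-- `I` is a connected subposet of `P`. -/
def IsConnectedPoset (I : Set P) : Prop :=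
  I.Nonempty ∧ ∀ a ∈ I, ∀ b ∈ I, Relation.ReflTransGen (zigStep I) a b

/-- `I` is a convex subset of `P`. -/
def IsConvexPoset (I : Set P) : Prop :=
  ∀ ⦃a b c : P⦄, a ∈ I → c ∈ I → a ≤ b → b ≤ c → b ∈ I

/-- `I` is an interval of `P`: nonempty, convex and connected. -/
def IsIntervalPoset (I : Set P) : Prop := IsConvexPoset I ∧ IsConnectedPoset I

/-- The `ε`-thickening of a subset of a poset with respect to a family of translations. -/
def thicken (Ω : ℝ≥0 → P → P) (I : Set P) (ε : ℝ≥0) : Set P :=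
  {r : P | ∃ p ∈ I, ∃ p' ∈ I, p ≤ Ω ε r ∧ r ≤ Ω ε p'}

/-- For a family of superlinear translations `Ω` on a poset `P` and an interval `I` of `P`,
every `ε`-thickening `I^ε` of `I` is again an interval (nonempty, convex, connected). -/
theorem thickening_of_interval_is_interval (Ω : ℝ≥0 → P → P)
    (hmono : ∀ ε : ℝ≥0, Monotone (Ω ε)) (hinfl : ∀ (ε : ℝ≥0) (p : P), p ≤ Ω ε p)
    (hzero : Ω 0 = id) (hsuper : ∀ (ε ζ : ℝ≥0) (p : P), Ω ε (Ω ζ p) ≤ Ω (ε + ζ) p)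
    (I : Set P) (hI : IsIntervalPoset I) (ε : ℝ≥0) :
    IsIntervalPoset (thicken Ω I ε) := by
  obtain ⟨hconv, hne, hconn⟩ := hI
  have hsub : I ⊆ thicken Ω I ε := fun p hp =>
    ⟨p, hp, p, hp, hinfl ε p, hinfl ε p⟩
  have hΩmem : ∀ p ∈ I, Ω ε p ∈ thicken Ω I ε := fun p hp =>
    ⟨p, hp, p, hp, le_trans (hinfl ε p) (hmono ε (hinfl ε p)), le_refl _⟩
  refine ⟨?_, ?_, ?_⟩
  · intro a b c ha hc hab hbc
    obtain ⟨p, hp, _, _, h1, _⟩ := ha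
    obtain ⟨_, _, p', hp', _, h2⟩ := hc
    exact ⟨p, hp, p', hp', le_trans h1 (hmono ε hab), le_trans hbc h2⟩
  · exact hne.mono hsub
  · rintro a ⟨p, hp, p', hp', h1, h2⟩ b ⟨q, hq, q', hq', h3, h4⟩
    have ha : a ∈ thicken Ω I ε := ⟨p, hp, p', hp', h1, h2⟩
    have hb : b ∈ thicken Ω I ε := ⟨q, hq, q', hq', h3, h4⟩
    have lift : Relation.ReflTransGen (zigStep I) p' q' →
        Relation.ReflTransGen (zigStep (thicken Ω I ε)) p' q' :=
      fun h => Relation.ReflTransGen.mono (fun x y (hh : zigStep I x y) =>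
        (⟨hsub hh.1, hsub hh.2.1, hh.2.2⟩ : zigStep (thicken Ω I ε) x y)) p' q' h
    have s1 : zigStep (thicken Ω I ε) a (Ω ε p') := ⟨ha, hΩmem p' hp', Or.inl h2⟩
    have s2 : zigStep (thicken Ω I ε) (Ω ε p') p' := ⟨hΩmem p' hp', hsub hp', Or.inr (hinfl ε p')⟩
    have s3 : zigStep (thicken Ω I ε) q' (Ω ε q') := ⟨hsub hq', hΩmem q' hq', Or.inl (hinfl ε q')⟩
    have s4 : zigStep (thicken Ω I ε) (Ω ε q') b := ⟨hΩmem q' hq', hb, Or.inr h4⟩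
    exact ((((Relation.ReflTransGen.single s1).trans (Relation.ReflTransGen.single s2)).trans
      (lift (hconn p' hp' q' hq'))).trans (Relation.ReflTransGen.single s3)).trans
      (Relation.ReflTransGen.single s4)
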